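/- Abstract Chaitin-style argument: suppose Pr is a predicate on sentences of the form 'K(x) > L' and 'K(x) ≤ L' (indexed by x ∈ Fin (2^(L+1)+1)) such that (i) the system is consistent: there is no x with both Pr('K(x) > L') and Pr('K(x) ≤ L'); (ii) soundness-for-Σ₁: for every x, if K(x) ≤ L then Pr('K(x) ≤ L'); (iii) Chaitin: for every x, ¬Pr('K(x) > L'). Suppose further Pr is closed under the inference: if Pr('K(y) ≤ L') for all y ≠ x in Fin (2^(L+1)+1) and at least one element of Fin (2^(L+1)+1) has complexity > L is provable, then Pr('K(x) > L'). Then the number m of x ∈ Fin (2^(L+1)+1) with K(x) > L satisfies m ≥ 2. -/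
import Mathlib


/-- Abstract Chaitin-style base step: under consistency, Σ₁-soundness,
Chaitin's theorem `¬Pr(K(x) > L)`, a provable existence statement, and
closure under the "all-but-one" inference, the number `m` of
`x ∈ {0,…,2^(L+1)}` with `K x > L` is at least `2`. -/
theorem chaitin_base_step {S : Type*} (L : ℕ) (K : ℕ → ℕ)
    (Gt Le : Fin (2 ^ (L + 1) + 1) → S) (ExistsHigh : S) (Pr : S → Prop)
    (hcons : ¬ ∃ x, Pr (Gt x) ∧ Pr (Le x))
    (hsound : ∀ x, K x.val ≤ L → Pr (Le x))
    (hchaitin : ∀ x, ¬ Pr (Gt x))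
    (hcount : ∃ x : Fin (2 ^ (L + 1) + 1), K x.val > L)
    (hExists : Pr ExistsHigh)
    (hclosure : ∀ x : Fin (2 ^ (L + 1) + 1),
      Pr ExistsHigh → (∀ y, y ≠ x → Pr (Le y)) → Pr (Gt x)) :
    2 ≤ (Finset.univ.filter
      (fun x : Fin (2 ^ (L + 1) + 1) => K x.val > L)).card := by
  set F := Finset.univ.filter (fun x : Fin (2 ^ (L + 1) + 1) => K x.val > L) with hF
  by_contra h
  push_neg at h
  interval_cases hc : F.card
  · obtain ⟨x, hx⟩ := hcount
    have : x ∈ F := by simp [hF, hx]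
    rw [Finset.card_eq_zero] at hc
    simp [hc] at this
  · rw [Finset.card_eq_one] at hc
    obtain ⟨x, hx⟩ := hc
    refine hchaitin x (hclosure x hExists ?_)
    intro y hy
    refine hsound y ?_
    by_contra hy2
    push_neg at hy2
    have : y ∈ F := by simp [hF, hy2]
    rw [hx] at this
    exact hy (Finset.mem_singleton.mp this)
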